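/- arXiv:1811.01216 — 3 statements merged into one kernel-verified Lean document; each statement's English description precedes it below -/
import Mathlib

section
/- Let g : [n]^ℓ → ℝ be a function with ‖g‖₁ = 1 (i.e., the sum of |g(x)| over all x equals 1) whose support has size at most k. Then there exists a subset U ⊆ [ℓ] with |U| ≤ log₂ k and values α_i ∈ [n] for i ∈ U such that |∑_{x : x_i = α_i for all i ∈ U} g(x)| ≥ k^{-C log k} for some absolute constant C. -/
/-!
Induct on the support bound `k`. Call a point of the support `T` light if some coordinate slice
through it contains at most half of `T`. Two distinct points differ in some coordinate `i`, and
their `i`-slices are disjoint, so at most one point of `T` is not light. Hence either some light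
slice carries a `1/(4k)` fraction of the `ℓ₁` mass, and we recurse on `g` restricted to that slice
(support at most `k/2`, one more fixed coordinate), or all points but one have mass below
`1/(4k)`, and then that point dominates: `|∑ g| ≥ ‖g‖₁ / 2`. The recursion stops after `log₂ k`
steps and loses a factor `4k` at each, which gives `‖g‖₁ ≤ (4k)^(log₂ k) · |∑_{x ∈ cyl} g x|`;
finally `4k ≤ k³` for `k ≥ 2`, so `(4k)^(log₂ k) ≤ k^(3 log₂ k)`.
-/

open Finset Function

section Combinatorics

variable {ι β : Type*} [DecidableEq β]

lemma card_filter_eq_add_card_filter_eq_le {α : Type*} (T : Finset α) (f : α → β) {a b : β}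
    (hab : a ≠ b) : #{x ∈ T | f x = a} + #{x ∈ T | f x = b} ≤ #T := by
  classical
  rw [← card_union_of_disjoint (disjoint_filter.2 fun x _ ha hb => hab (ha.symm.trans hb))]
  exact card_le_card (union_subset (filter_subset _ _) (filter_subset _ _))

lemma exists_forall_ne_exists_two_mul_card_slice_le (T : Finset (ι → β)) (hT : T.Nonempty) :
    ∃ y₀ ∈ T, ∀ y ∈ T, y ≠ y₀ → ∃ i, 2 * #{x ∈ T | x i = y i} ≤ #T := by
  by_cases hheavy : ∃ y₀ ∈ T, ∀ i, #T < 2 * #{x ∈ T | x i = y₀ i}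
  · obtain ⟨y₀, hy₀, hy₀heavy⟩ := hheavy
    refine ⟨y₀, hy₀, fun y _ hne => ?_⟩
    obtain ⟨i, hi⟩ := Function.ne_iff.mp hne
    have := card_filter_eq_add_card_filter_eq_le T (· i) hi
    have := hy₀heavy i
    exact ⟨i, by omega⟩
  · push Not at hheavy
    obtain ⟨y₀, hy₀⟩ := hT
    exact ⟨y₀, hy₀, fun y hy _ => hheavy y hy⟩

end Combinatorics

lemma sum_abs_sub_two_mul_sum_abs_erase_le {α : Type*} [DecidableEq α] (s : Finset α)
    (f : α → ℝ) {a : α} (ha : a ∈ s) :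
    ∑ x ∈ s, |f x| - 2 * ∑ x ∈ s.erase a, |f x| ≤ |∑ x ∈ s, f x| := by
  rw [← add_sum_erase s f ha, ← add_sum_erase s (|f ·|) ha]
  have := abs_sub_abs_le_abs_add (f a) (∑ x ∈ s.erase a, f x)
  have := abs_sum_le_sum_abs f (s.erase a)
  linarith

lemma abs_sum_eq_sum_abs_of_card_support_le_one {α : Type*} [Fintype α] (h : α → ℝ)
    (hh : #{x | h x ≠ 0} ≤ 1) : |∑ x, h x| = ∑ x, |h x| := by
  rw [← sum_filter_ne_zero, ← sum_filter_of_ne (p := (h · ≠ 0)) fun x _ hx => abs_ne_zero.mp hx]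
  rcases Nat.le_one_iff_eq_zero_or_eq_one.mp hh with h0 | h1
  · simp [card_eq_zero.mp h0]
  · obtain ⟨y, hy⟩ := card_eq_one.mp h1
    simp [hy]

section Cylinders

variable {ι β : Type*} [Fintype ι] [DecidableEq ι] [Fintype β] [DecidableEq β]

def cylinder (U : Finset ι) (α : ι → β) : Finset (ι → β) :=
  univ.filter fun x => ∀ i ∈ U, x i = α i

def sliceRestrict (h : (ι → β) → ℝ) (i : ι) (a : β) (x : ι → β) : ℝ :=
  if x i = a then h x else 0

@[simp]
lemma cylinder_empty (α : ι → β) : cylinder ∅ α = univ := by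
  simp [cylinder]

lemma filter_cylinder_eq_cylinder_insert {U : Finset ι} {α : ι → β} {i : ι} {a : β}
    (hα : i ∈ U → α i = a) :
    (cylinder U α).filter (· i = a) = cylinder (insert i U) (update α i a) := by
  ext x
  simp only [cylinder, mem_filter, mem_univ, true_and, forall_mem_insert, update_self]
  constructor
  · rintro ⟨hU, hi⟩
    refine ⟨hi, fun j hj => ?_⟩
    rcases eq_or_ne j i with rfl | hji
    · rw [hi, update_self]
    · rw [hU j hj, update_of_ne hji]
  · rintro ⟨hi, hU⟩
    refine ⟨fun j hj => ?_, hi⟩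
    rcases eq_or_ne j i with rfl | hji
    · rw [hi, hα hj]
    · rw [hU j hj, update_of_ne hji]

lemma abs_sum_cylinder_sliceRestrict_le (h : (ι → β) → ℝ) (U : Finset ι) (α : ι → β) (i : ι)
    (a : β) :
    |∑ x ∈ cylinder U α, sliceRestrict h i a x| ≤
      |∑ x ∈ cylinder (insert i U) (update α i a), h x| := by
  unfold sliceRestrict
  rw [← sum_filter]
  by_cases hα : i ∈ U → α i = a
  · rw [filter_cylinder_eq_cylinder_insert hα]
  · push Not at hα
    have hempty : (cylinder U α).filter (· i = a) = ∅ := by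
      refine filter_eq_empty_iff.mpr fun x hx hxi => hα.2 ?_
      rw [← hxi]
      exact ((mem_filter.mp hx).2 i hα.1).symm
    simp [hempty]

lemma support_sliceRestrict (h : (ι → β) → ℝ) (i : ι) (a : β) :
    ({x | sliceRestrict h i a x ≠ 0} : Finset (ι → β)) =
      {x ∈ ({x | h x ≠ 0} : Finset (ι → β)) | x i = a} := by
  ext x
  by_cases hxi : x i = a <;> simp [sliceRestrict, hxi]

lemma abs_le_sum_abs_sliceRestrict (h : (ι → β) → ℝ) (y : ι → β) (i : ι) :
    |h y| ≤ ∑ x, |sliceRestrict h i (y i) x| := by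
  have := single_le_sum (f := fun x => |sliceRestrict h i (y i) x|)
    (fun x _ => abs_nonneg _) (mem_univ y)
  simpa [sliceRestrict] using this

lemma exists_heavy_sliceRestrict_or_sum_abs_le_two_mul (h : (ι → β) → ℝ) {k : ℕ} (hk0 : 0 < k)
    (hk : #{x | h x ≠ 0} ≤ k) :
    (∃ i a, 2 * #{x | sliceRestrict h i a x ≠ 0} ≤ k ∧
        ∑ x, |h x| ≤ 4 * k * ∑ x, |sliceRestrict h i a x|) ∨
      ∑ x, |h x| ≤ 2 * |∑ x, h x| := by
  by_contra! ⟨hlight, hsum⟩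
  set T : Finset (ι → β) := {x | h x ≠ 0}
  set M := ∑ x, |h x|
  have hT_abs : ∑ x ∈ T, |h x| = M :=
    sum_filter_of_ne (p := (h · ≠ 0)) fun x _ hx => abs_ne_zero.mp hx
  have hT : T.Nonempty := by
    by_contra hT
    rw [not_nonempty_iff_eq_empty.mp hT, sum_empty] at hT_abs
    linarith [abs_nonneg (∑ x, h x)]
  obtain ⟨y₀, hy₀, hy₀light⟩ := exists_forall_ne_exists_two_mul_card_slice_le T hT
  have hrest : ∀ y ∈ T.erase y₀, 4 * k * |h y| ≤ M := by
    intro y hy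
    obtain ⟨i, hi⟩ := hy₀light y (mem_of_mem_erase hy) (ne_of_mem_erase hy)
    rw [← support_sliceRestrict] at hi
    calc 4 * k * |h y| ≤ 4 * k * ∑ x, |sliceRestrict h i (y i) x| := by
          gcongr
          exact abs_le_sum_abs_sliceRestrict h y i
      _ ≤ M := (hlight i (y i) (hi.trans hk)).le
  have hM : 0 ≤ M := by positivity
  have hkR : (0 : ℝ) < k := by exact_mod_cast hk0
  have h4rest : 4 * ∑ y ∈ T.erase y₀, |h y| ≤ M := by
    refine le_of_mul_le_mul_left ?_ hkR
    calc k * (4 * ∑ y ∈ T.erase y₀, |h y|) = ∑ y ∈ T.erase y₀, 4 * k * |h y| := by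
          rw [← mul_assoc, mul_comm (k : ℝ) 4, mul_sum]
      _ ≤ #(T.erase y₀) • M := sum_le_card_nsmul _ _ _ hrest
      _ ≤ k * M := by
          rw [nsmul_eq_mul]
          gcongr
          exact_mod_cast card_erase_le.trans hk
  have := sum_abs_sub_two_mul_sum_abs_erase_le T h hy₀
  rw [hT_abs, sum_filter_ne_zero] at this
  linarith

lemma sum_abs_le_mul_abs_sum_cylinder [Nonempty (ι → β)] (k : ℕ) (h : (ι → β) → ℝ)
    (hk : #{x | h x ≠ 0} ≤ k) :
    ∃ (U : Finset ι) (α : ι → β), #U ≤ Nat.log 2 k ∧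
      ∑ x, |h x| ≤ (4 * k) ^ Nat.log 2 k * |∑ x ∈ cylinder U α, h x| := by
  induction k using Nat.strong_induction_on generalizing h with
  | _ k ih =>
  rcases le_or_gt k 1 with hk1 | hk2
  · refine ⟨∅, Classical.arbitrary _, by simp, ?_⟩
    rw [Nat.log_of_lt (by omega), pow_zero, one_mul, cylinder_empty,
      abs_sum_eq_sum_abs_of_card_support_le_one h (hk.trans hk1)]
  have hlog : 1 ≤ Nat.log 2 k := Nat.log_pos (by norm_num) hk2
  rcases exists_heavy_sliceRestrict_or_sum_abs_le_two_mul h (by omega) hk with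
    ⟨i, a, hcard, hmass⟩ | hsum
  · obtain ⟨U, α, hU, hcorr⟩ :=
      ih (k / 2) (by omega) (sliceRestrict h i a) ((Nat.le_div_iff_mul_le two_pos).mpr (by omega))
    rw [Nat.log_div_base] at hU hcorr
    refine ⟨insert i U, update α i a, (card_insert_le _ _).trans (by omega), ?_⟩
    have hhalf : (4 * (k / 2 : ℕ) : ℝ) ≤ 4 * k := by
      gcongr
      exact_mod_cast Nat.div_le_self k 2
    calc ∑ x, |h x| ≤ 4 * k * ∑ x, |sliceRestrict h i a x| := hmass
      _ ≤ 4 * k * ((4 * (k / 2 : ℕ)) ^ (Nat.log 2 k - 1) *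
            |∑ x ∈ cylinder U α, sliceRestrict h i a x|) := by gcongr
      _ ≤ 4 * k * ((4 * k) ^ (Nat.log 2 k - 1) *
            |∑ x ∈ cylinder (insert i U) (update α i a), h x|) := by
        gcongr 4 * k * (?_ ^ _ * ?_)
        exact abs_sum_cylinder_sliceRestrict_le h U α i a
      _ = (4 * k) ^ Nat.log 2 k * |∑ x ∈ cylinder (insert i U) (update α i a), h x| := by
        rw [← mul_assoc, ← pow_succ', Nat.sub_add_cancel hlog]
  · refine ⟨∅, Classical.arbitrary _, by simp, ?_⟩
    have h8 : (2 : ℝ) ≤ (4 * k) ^ Nat.log 2 k := by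
      have : (8 : ℝ) ≤ 4 * k := by norm_cast; omega
      linarith [le_self_pow₀ (by linarith : (1 : ℝ) ≤ 4 * k) (by omega : Nat.log 2 k ≠ 0)]
    rw [cylinder_empty]
    nlinarith [abs_nonneg (∑ x, h x)]

end Cylinders

lemma rpow_neg_three_mul_logb_le {k : ℕ} {t : ℝ} (ht : 1 ≤ (4 * k) ^ Nat.log 2 k * t) :
    (k : ℝ) ^ (-(3 * Real.logb 2 k)) ≤ t := by
  rcases le_or_gt k 1 with hk1 | hk2
  · interval_cases k <;> simpa using ht
  have hkR : (2 : ℝ) ≤ k := by exact_mod_cast hk2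
  have hpow : ((4 * k : ℝ)) ^ Nat.log 2 k ≤ (k : ℝ) ^ (3 * Real.logb 2 k) := by
    calc ((4 * k : ℝ)) ^ Nat.log 2 k ≤ (4 * k : ℝ) ^ Real.logb 2 k := by
          rw [← Real.rpow_natCast]
          exact Real.rpow_le_rpow_of_exponent_le (by linarith) (Real.natLog_le_logb k 2)
      _ ≤ ((k : ℝ) ^ (3 : ℝ)) ^ Real.logb 2 k := by
          refine Real.rpow_le_rpow (by positivity) ?_ (Real.logb_nonneg (by norm_num) (by linarith))
          rw [Real.rpow_ofNat]
          nlinarith [mul_le_mul hkR hkR (by norm_num) (by linarith)]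
      _ = (k : ℝ) ^ (3 * Real.logb 2 k) := (Real.rpow_mul (by positivity) _ _).symm
  rw [Real.rpow_neg (by positivity), inv_le_iff_one_le_mul₀' (by positivity)]
  have ht0 : 0 ≤ t := (pos_of_mul_pos_right (one_pos.trans_le ht) (by positivity)).le
  exact ht.trans (mul_le_mul_of_nonneg_right hpow ht0)

/-- Small-support functions on `[n]^ℓ` with unit `ℓ₁` norm are correlated with juntas:
there is a set `U` of at most `log₂ k` coordinates and values `α_i` such that the sum of `g`
over inputs agreeing with `α` on `U` has absolute value at least `k^{-C log₂ k}`. -/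
theorem small_support_junta_correlation :
    ∃ C : ℝ, 0 < C ∧
      ∀ (n ℓ k : ℕ) (g : (Fin ℓ → Fin n) → ℝ),
        (∑ x : Fin ℓ → Fin n, |g x| = 1) →
        ((Finset.univ.filter fun x : Fin ℓ → Fin n => g x ≠ 0).card ≤ k) →
        ∃ (U : Finset (Fin ℓ)) (α : Fin ℓ → Fin n),
          (U.card : ℝ) ≤ Real.logb 2 k ∧
          (k : ℝ) ^ (-(C * Real.logb 2 k)) ≤
            |∑ x ∈ Finset.univ.filter (fun x : Fin ℓ → Fin n => ∀ i ∈ U, x i = α i), g x| := by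
  refine ⟨3, by norm_num, fun n ℓ k g hg hk => ?_⟩
  have : Nonempty (Fin ℓ → Fin n) := by
    by_contra hempty
    rw [not_nonempty_iff] at hempty
    simp at hg
  obtain ⟨U, α, hU, hcorr⟩ := sum_abs_le_mul_abs_sum_cylinder k g hk
  refine ⟨U, α, (Nat.cast_le.mpr hU).trans (Real.natLog_le_logb k 2), ?_⟩
  -- The two sides decide `∀ i ∈ U, _` by different (propositionally equal) instances.
  convert rpow_neg_three_mul_logb_le (by rwa [hg] at hcorr)
  ext x
  simp [cylinder]
end

section
/- For every real number q, ∑_{σ ∈ S_n} q^{cycles(σ)} = q(q+1)(q+2)⋯(q+n-1). -/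
open Finset

/-- Number of cycles of a permutation, counting fixed points as cycles. -/
def cyclesCount {n : ℕ} (σ : Equiv.Perm (Fin n)) : ℕ :=
  σ.cycleType.card + (Finset.univ.filter fun x => σ x = x).card

/-!
Write `σ ∈ S_{n+1}` as `swap 0 p * τ` with `τ` fixing `0`, i.e. `τ` is a permutation `e` of the
remaining `n` points extended by the fixed point `0`. For `p = 0` this adds a cycle; for `p ≠ 0`
it inserts `0` into the cycle of `e` through `p`, which keeps the number of cycles. Hence
`∑_{σ ∈ S_{n+1}} q^{cycles σ} = (q + n) ∑_{e ∈ S_n} q^{cycles e}`.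
-/

namespace Equiv.Perm

variable {α : Type*} [DecidableEq α] [Fintype α]

theorem IsCycle.card_cycleType_swap_mul_add_card_support {c : Perm α} (hc : c.IsCycle) {x : α}
    (hx : c x ≠ x) :
    Multiset.card (swap x (c x) * c).cycleType + #c.support
      = Multiset.card c.cycleType + #(swap x (c x) * c).support + 1 := by
  by_cases hcc : c (c x) = x
  · have hswap : c = swap x (c x) := hc.eq_swap_of_apply_apply_eq_self hx hcc
    have hone : swap x (c x) * c = 1 := by nth_rw 2 [hswap]; exact swap_mul_self _ _
    have htwo : #c.support = 2 := card_support_eq_two.mpr ⟨x, c x, hx.symm, hswap⟩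
    simp [hone, htwo, hc.cycleType]
  · have hpos : 0 < #c.support := card_pos.mpr ⟨x, mem_support.mpr hx⟩
    rw [hc.cycleType, (hc.swap_mul hx hcc).cycleType, support_swap_mul_eq c x hcc,
      card_sdiff_of_subset (singleton_subset_iff.mpr (mem_support.mpr hx)), card_singleton]
    simp only [Multiset.card_singleton]
    omega

/-- `swap x (σ x) * σ` splits `x` off as a new fixed point; only the cycle of `σ` through `x`
changes. -/
theorem card_cycleType_swap_mul_add_card_support (σ : Perm α) {x : α} (hx : σ x ≠ x) :
    Multiset.card (swap x (σ x) * σ).cycleType + #σ.support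
      = Multiset.card σ.cycleType + #(swap x (σ x) * σ).support + 1 := by
  set c := σ.cycleOf x
  set d := σ * c⁻¹
  have hc_mem : c ∈ σ.cycleFactorsFinset :=
    cycleOf_mem_cycleFactorsFinset_iff.mpr (mem_support.mpr hx)
  have hcd : Disjoint c d := (disjoint_mul_inv_of_mem_cycleFactorsFinset hc_mem).symm
  have hσ : σ = c * d := by rw [hcd.commute.eq]; exact (inv_mul_cancel_right σ c).symm
  have hcx : c x = σ x := cycleOf_apply_self σ x
  have hsplit : swap x (σ x) * σ = (swap x (c x) * c) * d := by rw [hcx, mul_assoc, ← hσ]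
  have hcd' : Disjoint (swap x (c x) * c) d :=
    hcd.mono (fun _ hy => (mem_support_swap_mul_imp_mem_support_ne hy).1) subset_rfl
  have hc : c.IsCycle := isCycle_cycleOf σ hx
  have key := hc.card_cycleType_swap_mul_add_card_support (hcx ▸ hx)
  clear_value c d
  rw [hsplit, hcd'.cycleType_mul, hcd'.card_support_mul, hσ, hcd.cycleType_mul,
    hcd.card_support_mul, Multiset.card_add, Multiset.card_add]
  omega

end Equiv.Perm

open Equiv Equiv.Perm

theorem cyclesCount_add_card_support {n : ℕ} (σ : Perm (Fin n)) :
    cyclesCount σ + #σ.support = Multiset.card σ.cycleType + n := by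
  rw [cyclesCount, add_assoc, support, card_filter_add_card_filter_not, card_univ,
    Fintype.card_fin]

theorem cyclesCount_swap_mul {n : ℕ} (σ : Perm (Fin n)) {x : Fin n} (hx : σ x ≠ x) :
    cyclesCount (swap x (σ x) * σ) = cyclesCount σ + 1 := by
  have := card_cycleType_swap_mul_add_card_support σ hx
  have := cyclesCount_add_card_support σ
  have := cyclesCount_add_card_support (swap x (σ x) * σ)
  omega

theorem decomposeFin_symm_zero_eq_extendDomain {n : ℕ} (e : Perm (Fin n)) :
    decomposeFin.symm (0, e) = e.extendDomain (finSuccAboveEquiv 0) := by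
  ext x
  refine Fin.cases ?_ (fun i => ?_) x
  · rw [decomposeFin_symm_apply_zero, extendDomain_apply_not_subtype _ _ (by simp)]
  · have := extendDomain_apply_image e (finSuccAboveEquiv 0) i
    simp only [finSuccAboveEquiv_apply, Fin.succAbove_zero] at this
    rw [decomposeFin_symm_apply_succ, swap_self, this, refl_apply]

theorem cyclesCount_decomposeFin_symm_zero {n : ℕ} (e : Perm (Fin n)) :
    cyclesCount (decomposeFin.symm (0, e)) = cyclesCount e + 1 := by
  have := cyclesCount_add_card_support (decomposeFin.symm (0, e))
  have := cyclesCount_add_card_support e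
  rw [decomposeFin_symm_zero_eq_extendDomain, cycleType_extendDomain, card_support_extend_domain] at *
  omega

theorem decomposeFin_symm_eq_swap_mul {n : ℕ} (p : Fin (n + 1)) (e : Perm (Fin n)) :
    decomposeFin.symm (p, e) = swap 0 p * decomposeFin.symm (0, e) := by
  ext x
  refine Fin.cases ?_ (fun i => ?_) x
  · simp only [decomposeFin_symm_apply_zero, mul_apply, swap_apply_left]
  · simp only [decomposeFin_symm_apply_succ, mul_apply, swap_self, refl_apply]

theorem cyclesCount_decomposeFin_symm {n : ℕ} (p : Fin (n + 1)) (e : Perm (Fin n)) :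
    cyclesCount (decomposeFin.symm (p, e)) = cyclesCount e + if p = 0 then 1 else 0 := by
  split_ifs with hp
  · rw [hp, cyclesCount_decomposeFin_symm_zero]
  · have hσ0 : decomposeFin.symm (p, e) 0 = p := decomposeFin_symm_apply_zero p e
    have hτ : decomposeFin.symm (0, e)
        = swap 0 (decomposeFin.symm (p, e) 0) * decomposeFin.symm (p, e) := by
      rw [hσ0, decomposeFin_symm_eq_swap_mul p e, swap_mul_self_mul]
    have := cyclesCount_swap_mul (decomposeFin.symm (p, e)) (hσ0.trans_ne hp)
    rw [← hτ, cyclesCount_decomposeFin_symm_zero] at this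
    omega

theorem sum_pow_ite_eq {R : Type*} [Semiring R] {n : ℕ} (q : R) :
    ∑ p : Fin (n + 1), q ^ (if p = 0 then 1 else 0) = q + n := by
  simp [Fin.sum_univ_succ, Fin.succ_ne_zero]

/-- `∑_{σ ∈ S_n} q^{cycles(σ)} = q(q+1)⋯(q+n-1)`. -/
theorem sum_q_pow_cycles (n : ℕ) (q : ℝ) :
    ∑ σ : Equiv.Perm (Fin n), q ^ cyclesCount σ = ∏ i ∈ Finset.range n, (q + i) := by
  induction n with
  | zero => simp [cyclesCount, Subsingleton.elim _ (1 : Perm (Fin 0))]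
  | succ n ih =>
    calc ∑ σ : Perm (Fin (n + 1)), q ^ cyclesCount σ
        = ∑ p : Fin (n + 1), ∑ e : Perm (Fin n), q ^ cyclesCount (decomposeFin.symm (p, e)) := by
          rw [← (decomposeFin.symm).sum_comp, Fintype.sum_prod_type]
      _ = (∑ e : Perm (Fin n), q ^ cyclesCount e) *
            ∑ p : Fin (n + 1), q ^ (if p = 0 then 1 else 0) := by
          simp only [cyclesCount_decomposeFin_symm, pow_add, ← sum_mul, ← mul_sum]
      _ = ∏ i ∈ range (n + 1), (q + i) := by
          rw [sum_pow_ite_eq, ih, prod_range_succ]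
end

section
/- Let μ ⊢ n with μ₁ ≥ n - ℓ, let θ > 0 with q = e^θ ≤ ℓ, and let η = min_{j ∈ {1,...,ℓ}} |q - j|, assumed ≤ 1/2. Then |∏_{u ∈ A}(q + c(u))| ≥ η^{2√ℓ}, where A is the set of boxes of the Young diagram of μ outside the first row and c(u) is the content of u. -/
open Finset

/-- The boxes of the Young diagram of the partition `μ`. -/
def cells (r : ℕ) (μ : Fin r → ℕ) : Finset ((_ : Fin r) × ℕ) :=
  Finset.univ.sigma fun i => Finset.range (μ i)

/-- The content of a box: column minus row. -/
def contentBox {r : ℕ} (u : (_ : Fin r) × ℕ) : ℤ := (u.2 : ℤ) - (u.1 : ℤ)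

/-- The hook length of a box. -/
def hookLen {r : ℕ} (μ : Fin r → ℕ) (u : (_ : Fin r) × ℕ) : ℕ :=
  (μ u.1 - u.2) + (Finset.univ.filter fun i' => u.1 < i' ∧ u.2 < μ i').card

lemma diag_sq_le (r ℓ : ℕ) (μ : Fin r → ℕ) (hmono : Antitone μ)
    (hA : ∑ i ∈ univ.filter (fun i : Fin r => (i : ℕ) ≠ 0), μ i ≤ ℓ) (c : ℤ) :
    (((cells r μ).filter (fun u => (u.1 : ℕ) ≠ 0 ∧ contentBox u = c)).card) ^ 2 ≤ ℓ := by
  set D := (cells r μ).filter (fun u => (u.1 : ℕ) ≠ 0 ∧ contentBox u = c) with hD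
  have hmemD : ∀ u ∈ D, u.2 < μ u.1 ∧ (u.1 : ℕ) ≠ 0 ∧ (u.2 : ℤ) = c + (u.1 : ℕ) := by
    intro u hu
    simp only [hD, mem_filter, cells, mem_sigma, mem_univ, true_and, mem_range] at hu
    refine ⟨hu.1, hu.2.1, ?_⟩
    have := hu.2.2
    simp only [contentBox] at this
    omega
  set S := D.image Sigma.fst with hS
  have hcard : D.card = S.card := by
    rw [hS]
    refine (Finset.card_image_of_injOn ?_).symm
    intro u hu v hv huv
    have h1 := (hmemD u hu).2.2
    have h2 := (hmemD v hv).2.2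
    rw [huv] at h1
    have h3 : u.2 = v.2 := by omega
    exact Sigma.ext huv (heq_of_eq h3)
  rcases S.eq_empty_or_nonempty with hSe | hSne
  · rw [hcard, hSe]; simpa using Nat.zero_le ℓ
  · set a := S.min' hSne with ha
    set b := S.max' hSne with hb
    have hab : a ≤ b := S.min'_le b (S.max'_mem hSne)
    -- get the boxes in rows a and b
    obtain ⟨ua, hua, huaf⟩ := Finset.mem_image.mp (S.min'_mem hSne)
    obtain ⟨ub, hub, hubf⟩ := Finset.mem_image.mp (S.max'_mem hSne)
    have hA1 := hmemD ua hua
    have hB1 := hmemD ub hub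
    rw [huaf] at hA1
    rw [hubf] at hB1
    -- S ⊆ Icc a b
    have hsub : S ⊆ Finset.Icc a b := by
      intro i hi
      exact Finset.mem_Icc.mpr ⟨S.min'_le i hi, S.le_max' i hi⟩
    have hcard2 : S.card ≤ (b : ℕ) - (a : ℕ) + 1 := by
      calc S.card ≤ (Finset.Icc a b).card := Finset.card_le_card hsub
        _ = (b : ℕ) + 1 - (a : ℕ) := by rw [Fin.card_Icc]
        _ ≤ (b : ℕ) - (a : ℕ) + 1 := by omega
    -- each row in Icc a b has length ≥ ub.2 + 1
    have hblt : ub.2 < μ b := hB1.1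
    have hrow : ∀ i ∈ Finset.Icc a b, ub.2 + 1 ≤ μ i := by
      intro i hi
      have : μ b ≤ μ i := hmono (Finset.mem_Icc.mp hi).2
      omega
    have hIccsub : Finset.Icc a b ⊆ univ.filter (fun i : Fin r => (i : ℕ) ≠ 0) := by
      intro i hi
      have h1 : a ≤ i := (Finset.mem_Icc.mp hi).1
      have : (a : ℕ) ≤ (i : ℕ) := h1
      simp only [mem_filter, mem_univ, true_and]
      have := hA1.2.1
      omega
    have hsum : ((b : ℕ) - (a : ℕ) + 1) * (ub.2 + 1) ≤ ℓ := by
      calc ((b : ℕ) - (a : ℕ) + 1) * (ub.2 + 1)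
          = ∑ _i ∈ Finset.Icc a b, (ub.2 + 1) := by
            rw [Finset.sum_const, Fin.card_Icc, smul_eq_mul]
            congr 1
            omega
        _ ≤ ∑ i ∈ Finset.Icc a b, μ i := Finset.sum_le_sum hrow
        _ ≤ ∑ i ∈ univ.filter (fun i : Fin r => (i : ℕ) ≠ 0), μ i :=
            Finset.sum_le_sum_of_subset hIccsub
        _ ≤ ℓ := hA
    -- ub.2 ≥ b - a
    have hub2 : (b : ℕ) - (a : ℕ) ≤ ub.2 := by
      have h1 := hA1.2.2
      have h2 := hB1.2.2
      omega
    calc D.card ^ 2 = S.card ^ 2 := by rw [hcard]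
      _ ≤ ((b : ℕ) - (a : ℕ) + 1) ^ 2 := Nat.pow_le_pow_left hcard2 2
      _ ≤ ((b : ℕ) - (a : ℕ) + 1) * (ub.2 + 1) := by
          rw [pow_two]; exact Nat.mul_le_mul_left _ (by omega)
      _ ≤ ℓ := hsum

/-- Lower bound on the numerator of the Cayley–Mallows scalar when `q = e^θ ≤ ℓ`:
with `η = min_{1 ≤ j ≤ ℓ} |q - j| ≤ 1/2`, `|∏_{u ∈ A}(q + c(u))| ≥ η^{2√ℓ}`. -/
theorem mallows_numerator_lower_bound (n ℓ r : ℕ) (hr : 0 < r) (hℓ : 1 ≤ ℓ)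
    (μ : Fin r → ℕ)
    (hmono : Antitone μ) (hpos : ∀ i, 0 < μ i) (hsum : ∑ i, μ i = n)
    (hfirst : n - ℓ ≤ μ ⟨0, hr⟩)
    (θ q η : ℝ) (hθ : 0 < θ) (hq : q = Real.exp θ) (hqℓ : q ≤ (ℓ : ℝ))
    (hη : η = (Finset.Icc 1 ℓ).inf' (Finset.nonempty_Icc.mpr hℓ) (fun j => |q - (j : ℝ)|))
    (hη2 : η ≤ 1 / 2) :
    η ^ (2 * Real.sqrt ℓ) ≤
      |∏ u ∈ (cells r μ).filter (fun u => (u.1 : ℕ) ≠ 0), (q + (contentBox u : ℝ))| := by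
  rw [Finset.abs_prod]
  have hq1 : 1 < q := by
    have := Real.add_one_le_exp θ
    rw [hq]; linarith
  have hℓ1 : (1 : ℝ) ≤ (ℓ : ℝ) := by exact_mod_cast hℓ
  have hsqrt1 : 1 ≤ Real.sqrt ℓ := by
    rw [show (1:ℝ) = Real.sqrt 1 by simp]
    exact Real.sqrt_le_sqrt hℓ1
  have hη0 : 0 ≤ η := by
    rw [hη]
    apply Finset.le_inf'
    intro j _
    positivity
  rcases eq_or_lt_of_le hη0 with h0 | hηpos
  · rw [← h0, Real.zero_rpow (by positivity)]
    exact Finset.prod_nonneg fun u _ => abs_nonneg _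
  -- sum of parts outside first row is ≤ ℓ
  have hAsum : ∑ i ∈ univ.filter (fun i : Fin r => (i : ℕ) ≠ 0), μ i ≤ ℓ := by
    have h0 : (⟨0, hr⟩ : Fin r) ∈ univ.filter (fun i : Fin r => (i : ℕ) = 0) := by
      simp
    have hsingle : univ.filter (fun i : Fin r => (i : ℕ) = 0) = {⟨0, hr⟩} := by
      ext i
      simp only [mem_filter, mem_univ, true_and, mem_singleton]
      constructor
      · intro h; exact Fin.ext h
      · intro h; rw [h]
    have hsplit := Finset.sum_filter_add_sum_filter_not univ
      (fun i : Fin r => (i : ℕ) = 0) μ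
    rw [hsingle, Finset.sum_singleton, hsum] at hsplit
    have hre : ∑ x ∈ filter (fun x : Fin r => ¬ (x : ℕ) = 0) univ, μ x
        = ∑ i ∈ univ.filter (fun i : Fin r => (i : ℕ) ≠ 0), μ i := rfl
    omega
  set P : ((_ : Fin r) × ℕ) → Prop := fun u => |q + (contentBox u : ℝ)| < 1 with hP
  have hPdec : DecidablePred P := fun u => Real.decidableLT _ _
  set A := (cells r μ).filter (fun u => (u.1 : ℕ) ≠ 0) with hA
  set B := A.filter P with hB
  -- pointwise bound on bad boxes
  have hpt : ∀ u ∈ B, η ≤ |q + (contentBox u : ℝ)| := by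
    intro u hu
    have hlt : |q + (contentBox u : ℝ)| < 1 := (mem_filter.mp hu).2
    obtain ⟨hl, hrr⟩ := abs_lt.mp hlt
    set c := contentBox u with hc
    have hm1 : (1 : ℤ) ≤ -c := by
      by_contra h
      push_neg at h
      have : (0:ℝ) ≤ (c : ℝ) := by exact_mod_cast (by omega : (0:ℤ) ≤ c)
      linarith
    have hm2 : -c ≤ (ℓ : ℤ) := by
      have h1 : -(c : ℝ) < (ℓ : ℝ) + 1 := by linarith
      have h2 : (-c : ℤ) < (ℓ : ℤ) + 1 := by exact_mod_cast h1
      omega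
    set m : ℕ := (-c).toNat with hm
    have hmc : ((m : ℕ) : ℤ) = -c := Int.toNat_of_nonneg (by omega)
    have hmem : m ∈ Finset.Icc 1 ℓ := by
      rw [Finset.mem_Icc]
      omega
    have hle : η ≤ |q - (m : ℝ)| := by
      rw [hη]; exact Finset.inf'_le _ hmem
    have hmr : ((m : ℕ) : ℝ) = -(c : ℝ) := by exact_mod_cast congrArg (Int.cast : ℤ → ℝ) hmc
    rwa [hmr, sub_neg_eq_add] at hle
  -- cardinality bound on bad boxes
  have hcardB : (B.card : ℝ) ≤ 2 * Real.sqrt ℓ := by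
    set D1 := (cells r μ).filter (fun u => (u.1 : ℕ) ≠ 0 ∧ contentBox u = -⌊q⌋) with hD1
    set D2 := (cells r μ).filter (fun u => (u.1 : ℕ) ≠ 0 ∧ contentBox u = -⌊q⌋ - 1) with hD2
    have hsub : B ⊆ D1 ∪ D2 := by
      intro u hu
      have hu' := mem_filter.mp hu
      have huA := mem_filter.mp hu'.1
      have hlt : |q + (contentBox u : ℝ)| < 1 := hu'.2
      obtain ⟨hl, hrr⟩ := abs_lt.mp hlt
      have hf1 : (⌊q⌋ : ℝ) ≤ q := Int.floor_le q
      have hf2 : q < (⌊q⌋ : ℝ) + 1 := Int.lt_floor_add_one q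
      have hc1 : ((-⌊q⌋ - 2 : ℤ) : ℝ) < (contentBox u : ℝ) := by push_cast; linarith
      have hc2 : (contentBox u : ℝ) < ((-⌊q⌋ + 1 : ℤ) : ℝ) := by push_cast; linarith
      have hi1 : (-⌊q⌋ - 2 : ℤ) < contentBox u := by exact_mod_cast hc1
      have hi2 : contentBox u < (-⌊q⌋ + 1 : ℤ) := by exact_mod_cast hc2
      have : contentBox u = -⌊q⌋ ∨ contentBox u = -⌊q⌋ - 1 := by omega
      rcases this with h | h
      · exact Finset.mem_union_left _ (mem_filter.mpr ⟨huA.1, huA.2, h⟩)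
      · exact Finset.mem_union_right _ (mem_filter.mpr ⟨huA.1, huA.2, h⟩)
    have hd1 : (D1.card : ℝ) ≤ Real.sqrt ℓ := by
      have := diag_sq_le r ℓ μ hmono hAsum (-⌊q⌋)
      rw [← hD1] at this
      have h2 : ((D1.card : ℝ)) ^ 2 ≤ (ℓ : ℝ) := by exact_mod_cast this
      nlinarith [Real.sq_sqrt (show (0:ℝ) ≤ (ℓ:ℝ) by positivity),
        Real.sqrt_nonneg ((ℓ:ℝ)), Nat.cast_nonneg (α := ℝ) D1.card]
    have hd2 : (D2.card : ℝ) ≤ Real.sqrt ℓ := by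
      have := diag_sq_le r ℓ μ hmono hAsum (-⌊q⌋ - 1)
      rw [← hD2] at this
      have h2 : ((D2.card : ℝ)) ^ 2 ≤ (ℓ : ℝ) := by exact_mod_cast this
      nlinarith [Real.sq_sqrt (show (0:ℝ) ≤ (ℓ:ℝ) by positivity),
        Real.sqrt_nonneg ((ℓ:ℝ)), Nat.cast_nonneg (α := ℝ) D2.card]
    have hle : B.card ≤ D1.card + D2.card :=
      le_trans (Finset.card_le_card hsub) (Finset.card_union_le _ _)
    have : (B.card : ℝ) ≤ (D1.card : ℝ) + (D2.card : ℝ) := by exact_mod_cast hle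
    linarith
  -- chain of inequalities
  have step1 : η ^ (2 * Real.sqrt ℓ) ≤ η ^ ((B.card : ℕ) : ℝ) :=
    Real.rpow_le_rpow_of_exponent_ge hηpos (by linarith) hcardB
  have step2 : η ^ ((B.card : ℕ) : ℝ) = η ^ (B.card : ℕ) := Real.rpow_natCast η B.card
  have step3 : η ^ (B.card : ℕ) ≤ ∏ u ∈ B, |q + (contentBox u : ℝ)| := by
    rw [← Finset.prod_const]
    exact Finset.prod_le_prod (fun _ _ => hη0) hpt
  have step4 : ∏ u ∈ B, |q + (contentBox u : ℝ)| ≤ ∏ u ∈ A, |q + (contentBox u : ℝ)| := by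
    rw [← Finset.prod_filter_mul_prod_filter_not A P]
    rw [← hB]
    have h1 : (1:ℝ) ≤ ∏ u ∈ A.filter (fun u => ¬ P u), |q + (contentBox u : ℝ)| := by
      calc (1:ℝ) = ∏ _u ∈ A.filter (fun u => ¬ P u), (1:ℝ) := by
            rw [Finset.prod_const_one]
        _ ≤ _ := by
            apply Finset.prod_le_prod (fun _ _ => zero_le_one)
            intro u hu
            have := (mem_filter.mp hu).2
            simp only [hP, not_lt] at this
            exact this
    have h2 : (0:ℝ) ≤ ∏ u ∈ B, |q + (contentBox u : ℝ)| :=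
      Finset.prod_nonneg fun u _ => abs_nonneg _
    nlinarith
  calc η ^ (2 * Real.sqrt ℓ) ≤ η ^ ((B.card : ℕ) : ℝ) := step1
    _ = η ^ (B.card : ℕ) := step2
    _ ≤ ∏ u ∈ B, |q + (contentBox u : ℝ)| := step3
    _ ≤ ∏ u ∈ A, |q + (contentBox u : ℝ)| := step4
end
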